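/- Let U ⊆ ℝⁿ be open, p₀ ∈ U, let X₁,…,X_r be linearly independent real-valued smooth vector fields on U, and let 𝒟 be the C^∞(U)-module of smooth vector fields generated by X₁,…,X_r. If f, g are germs of real-valued smooth functions at p₀ with 0 ≤ f ≤ g on a neighborhood of p₀ and f(p₀) = g(p₀), then ν_𝒟(f)(p₀) ≥ ν_𝒟(g)(p₀). -/

import Mathlib

open Topology

/-- ℝⁿ as a Pi type. -/
abbrev Rn (n : ℕ) := Fin n → ℝ

/-- The action of a vector field `Y` on a function `f` : `(Y f)(x) = df_x(Y(x))`. -/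
noncomputable def vfApply {n : ℕ} {E : Type*} [NormedAddCommGroup E] [NormedSpace ℝ E]
    (Y : Rn n → Rn n) (f : Rn n → E) : Rn n → E :=
  fun x => fderiv ℝ f x (Y x)

/-- `Y` belongs to the `C^∞(U)`-module `𝒟` of vector fields generated by `X₁, …, X_r`. -/
def InModule {n r : ℕ} (U : Set (Rn n)) (X : Fin r → Rn n → Rn n) (Y : Rn n → Rn n) : Prop :=
  ∃ a : Fin r → Rn n → ℝ, (∀ j, ContDiffOn ℝ (⊤ : ℕ∞) (a j) U) ∧
    ∀ x ∈ U, Y x = ∑ j, a j x • X j x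

/-- The vanishing order `ν_𝒟(f)(p)`: the smallest `m` such that some iterated derivative
`Y_m(⋯(Y_1 f)⋯)(p) ≠ 0` with all `Y_i ∈ 𝒟`; `⊤` if no such `m` exists. -/
noncomputable def vanishOrder {n r : ℕ} {E : Type*} [NormedAddCommGroup E] [NormedSpace ℝ E]
    (U : Set (Rn n)) (X : Fin r → Rn n → Rn n) (f : Rn n → E) (p : Rn n) : ℕ∞ :=
  sInf {m : ℕ∞ | ∃ Ys : List (Rn n → Rn n), (Ys.length : ℕ∞) = m ∧
    (∀ Y ∈ Ys, InModule U X Y) ∧ (Ys.foldl (fun g Y => vfApply Y g) f) p ≠ 0}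

/-!
Following integral curves of the fields for times in `[-ρ, ρ]`, starting from `p₀`, sweeps out
sets `reachSet` that shrink to `p₀`. If all `𝒟`-derivatives of `g` of order `≤ m` vanish at `p₀`,
integrating along the curves shows `g = O(ρ ^ (m + 1))` on these sets, and `|f| ≤ g` passes the
bound to `f`. Conversely, if `h = O(ρ ^ (k + 1))` on the set reached via `Z` after `L`, then along
each `Z`-curve the Taylor polynomial of `h` is `O(ρ ^ (k + 1))` on `[-ρ, ρ]`, hence so is `ρ` times
its linear coefficient `Z h`; thus `Z h = O(ρ ^ k)` on the set reached via `L`. Peeling off the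
`m` fields of `Y₁, …, Yₘ` leaves `Yₘ ⋯ Y₁ f (p₀) = O(ρ)`, i.e. zero. Cutting the fields off to
compact support makes them globally bounded, and Picard–Lindelöf provides the curves.
-/

open Set Filter Metric
open scoped Nat ContDiff

section Localization

variable {E F : Type*} [NormedAddCommGroup E] [NormedSpace ℝ E]
  [NormedAddCommGroup F] [NormedSpace ℝ F]

theorem exists_cutoff [FiniteDimensional ℝ E] {U : Set E} (hU : IsOpen U) {p : E} (hp : p ∈ U) :
    ∃ χ : E → ℝ, ContDiff ℝ ∞ χ ∧ HasCompactSupport χ ∧ tsupport χ ⊆ U ∧ χ =ᶠ[𝓝 p] 1 := by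
  obtain ⟨ε, hε, hball⟩ := isOpen_iff.1 hU p hp
  let bump : ContDiffBump p := ⟨ε / 3, ε / 2, by positivity, by linarith⟩
  refine ⟨bump, bump.contDiff, bump.hasCompactSupport, ?_, bump.eventuallyEq_one⟩
  rw [bump.tsupport_eq]
  exact (closedBall_subset_ball (by change ε / 2 < ε; linarith)).trans hball

theorem contDiff_smul_of_tsupport_subset {U : Set E} (hU : IsOpen U) {χ : E → ℝ}
    (hχ : ContDiff ℝ ∞ χ) (hχU : tsupport χ ⊆ U) {a : E → F} (ha : ContDiffOn ℝ ∞ a U) :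
    ContDiff ℝ ∞ (fun x => χ x • a x) := by
  refine contDiff_iff_contDiffAt.2 fun x => ?_
  by_cases hx : x ∈ U
  · exact hχ.contDiffAt.smul (ha.contDiffAt (hU.mem_nhds hx))
  · have hzero : (fun y => χ y • a y) =ᶠ[𝓝 x] fun _ => 0 :=
      (notMem_tsupport_iff_eventuallyEq.1 fun h => hx (hχU h)).mono fun y hy => by simp [hy]
    exact contDiffAt_const.congr_of_eventuallyEq hzero

end Localization

section VectorFields

variable {n r : ℕ} {F : Type*} [NormedAddCommGroup F] [NormedSpace ℝ F]

/-- `vfApplyList [Y₁, …, Yₘ] f = Yₘ (⋯ (Y₁ f))`. -/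
noncomputable def vfApplyList (Ys : List (Rn n → Rn n)) (f : Rn n → F) : Rn n → F :=
  Ys.foldl (fun g Y => vfApply Y g) f

theorem contDiff_vfApply {Y : Rn n → Rn n} {f : Rn n → F} (hY : ContDiff ℝ ∞ Y)
    (hf : ContDiff ℝ ∞ f) : ContDiff ℝ ∞ (vfApply Y f) :=
  (contDiff_infty_iff_fderiv.1 hf).2.clm_apply hY

theorem contDiff_iterate_vfApply {Y : Rn n → Rn n} {f : Rn n → F} (hY : ContDiff ℝ ∞ Y)
    (hf : ContDiff ℝ ∞ f) (k : ℕ) : ContDiff ℝ ∞ ((vfApply Y)^[k] f) := by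
  induction k with
  | zero => exact hf
  | succ k ih => rw [Function.iterate_succ_apply']; exact contDiff_vfApply hY ih

theorem Filter.EventuallyEq.vfApply {x : Rn n} {Y Y' : Rn n → Rn n} {f f' : Rn n → F}
    (hY : Y =ᶠ[𝓝 x] Y') (hf : f =ᶠ[𝓝 x] f') : vfApply Y f =ᶠ[𝓝 x] vfApply Y' f' := by
  filter_upwards [hY, hf.eventuallyEq_nhds] with y hYy hfy
  simp only [_root_.vfApply, hfy.fderiv_eq, hYy]

theorem vfApplyList_eventuallyEq {x : Rn n} {Ys Ys' : List (Rn n → Rn n)}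
    (hYs : List.Forall₂ (fun Y Y' => Y =ᶠ[𝓝 x] Y') Ys Ys') {f f' : Rn n → F}
    (hf : f =ᶠ[𝓝 x] f') : vfApplyList Ys f =ᶠ[𝓝 x] vfApplyList Ys' f' := by
  induction hYs generalizing f f' with
  | nil => exact hf
  | cons hY _ ih => exact ih (hY.vfApply hf)

theorem InModule.contDiffOn {U : Set (Rn n)} {X : Fin r → Rn n → Rn n}
    (hX : ∀ j, ContDiffOn ℝ ∞ (X j) U) {Y : Rn n → Rn n} (hY : InModule U X Y) :
    ContDiffOn ℝ ∞ Y U := by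
  obtain ⟨a, ha, hrep⟩ := hY
  exact (ContDiffOn.sum fun j _ => (ha j).smul (hX j)).congr hrep

theorem InModule.smul {U : Set (Rn n)} {X : Fin r → Rn n → Rn n} {Y : Rn n → Rn n}
    (hY : InModule U X Y) {χ : Rn n → ℝ} (hχ : ContDiff ℝ ∞ χ) :
    InModule U X (fun x => χ x • Y x) := by
  obtain ⟨a, ha, hrep⟩ := hY
  refine ⟨fun j x => χ x * a j x, fun j => hχ.contDiffOn.mul (ha j), fun x hx => ?_⟩
  simp [hrep x hx, Finset.smul_sum, smul_smul]

end VectorFields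

section Reach

variable {E F G : Type*} [NormedAddCommGroup E] [NormedSpace ℝ E]
  [NormedAddCommGroup F] [NormedAddCommGroup G]

/-- The points reached from `p` by following, for times in `[-ρ, ρ]`, an integral curve of each
field of `L` in turn, the last field first. -/
def reachSet : List (E → E) → E → ℝ → Set E
  | [], p, _ => {p}
  | Z :: L, p, ρ => {x | ∃ α : ℝ → E, α 0 ∈ reachSet L p ρ ∧
      (∀ t ∈ Icc (-ρ) ρ, HasDerivAt α (Z (α t)) t) ∧ ∃ τ ∈ Icc (-ρ) ρ, α τ = x}

def IsBigOOnReach (L : List (E → E)) (p : E) (h : E → F) (K : ℕ) : Prop :=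
  ∃ C, ∀ᶠ ρ in 𝓝[>] (0 : ℝ), ∀ x ∈ reachSet L p ρ, ‖h x‖ ≤ C * ρ ^ K

theorem eventually_reachSet_subset {L : List (E → E)} (hL : ∀ Z ∈ L, ∃ M, ∀ x, ‖Z x‖ ≤ M)
    {p : E} {s : Set E} (hs : s ∈ 𝓝 p) : ∀ᶠ ρ in 𝓝[>] (0 : ℝ), reachSet L p ρ ⊆ s := by
  induction L generalizing s with
  | nil => exact Eventually.of_forall fun _ x hx => (mem_singleton_iff.1 hx) ▸ mem_of_mem_nhds hs
  | cons Z L ih =>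
    obtain ⟨M, hM⟩ := hL Z List.mem_cons_self
    have hM0 : 0 ≤ M := (norm_nonneg _).trans (hM p)
    obtain ⟨r, hr, hrs⟩ := Metric.mem_nhds_iff.1 hs
    have hsmall : ∀ᶠ ρ in 𝓝[>] (0 : ℝ), M * ρ < r / 2 := by
      have : Tendsto (fun ρ : ℝ => M * ρ) (𝓝[>] 0) (𝓝 0) :=
        ((continuous_const_mul M).tendsto' 0 0 (mul_zero M)).mono_left nhdsWithin_le_nhds
      exact this.eventually_lt_const (half_pos hr)
    filter_upwards [ih (fun Y hY => hL Y (List.mem_cons_of_mem Z hY))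
      (ball_mem_nhds p (half_pos hr)), hsmall] with ρ hρL hρM
    rintro _ ⟨α, hα0, hα, τ, hτ, rfl⟩
    have h0 : (0 : ℝ) ∈ Icc (-ρ) ρ := ⟨by linarith [hτ.1, hτ.2], by linarith [hτ.1, hτ.2]⟩
    have hdisp : ‖α τ - α 0‖ ≤ M * ‖τ - 0‖ :=
      (convex_Icc (-ρ) ρ).norm_image_sub_le_of_norm_hasDerivWithin_le
        (fun t ht => (hα t ht).hasDerivWithinAt) (fun t _ => hM (α t)) h0 hτ
    have hτρ : ‖τ - 0‖ ≤ ρ := by simpa [abs_le] using hτ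
    apply hrs
    calc dist (α τ) p ≤ dist (α τ) (α 0) + dist (α 0) p := dist_triangle _ _ _
      _ < r / 2 + r / 2 := by
        refine add_lt_add_of_le_of_lt ?_ (hρL hα0)
        rw [dist_eq_norm]
        exact hdisp.trans ((mul_le_mul_of_nonneg_left hτρ hM0).trans hρM.le)
      _ = r := add_halves r

theorem isBigOOnReach_zero {L : List (E → E)} (hL : ∀ Z ∈ L, ∃ M, ∀ x, ‖Z x‖ ≤ M) {p : E}
    {h : E → F} (hh : ContinuousAt h p) : IsBigOOnReach L p h 0 :=
  ⟨‖h p‖ + 1, (eventually_reachSet_subset hL (hh.norm.eventually (gt_mem_nhds (lt_add_one _)))).mono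
    fun _ hρ x hx => by simpa using (hρ hx).le⟩

theorem IsBigOOnReach.of_norm_le {L : List (E → E)} (hL : ∀ Z ∈ L, ∃ M, ∀ x, ‖Z x‖ ≤ M)
    {p : E} {f : E → F} {g : E → G} (hfg : ∀ᶠ x in 𝓝 p, ‖f x‖ ≤ ‖g x‖) {K : ℕ}
    (hg : IsBigOOnReach L p g K) : IsBigOOnReach L p f K := by
  obtain ⟨C, hC⟩ := hg
  refine ⟨C, ?_⟩
  filter_upwards [hC, eventually_reachSet_subset hL hfg] with ρ hρ hsub x hx
  exact (hsub hx).trans (hρ x hx)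

theorem IsBigOOnReach.eq_zero {p : E} {h : E → F} {K : ℕ}
    (hh : IsBigOOnReach [] p h (K + 1)) : h p = 0 := by
  obtain ⟨C, hC⟩ := hh
  have hlim : Tendsto (fun ρ : ℝ => C * ρ ^ (K + 1)) (𝓝[>] 0) (𝓝 0) :=
    ((show Continuous fun ρ : ℝ => C * ρ ^ (K + 1) by fun_prop).tendsto' 0 0 (by simp)).mono_left
      nhdsWithin_le_nhds
  exact norm_le_zero_iff.1 (ge_of_tendsto hlim (hC.mono fun _ hρ => hρ p rfl))

end Reach

section Taylor

variable {n : ℕ} {F : Type*} [NormedAddCommGroup F] [NormedSpace ℝ F]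

theorem hasDerivAt_sum_pow_div_factorial_smul (c : ℕ → F) (M : ℕ) (t : ℝ) :
    HasDerivAt (fun t : ℝ => ∑ k ∈ Finset.range (M + 1), (t ^ k / k !) • c k)
      (∑ k ∈ Finset.range M, (t ^ k / k !) • c (k + 1)) t := by
  have hterm : ∀ k ∈ Finset.range M, HasDerivAt (fun t : ℝ => (t ^ (k + 1) / (k + 1)!) • c (k + 1))
      ((t ^ k / k !) • c (k + 1)) t := by
    intro k _
    convert ((hasDerivAt_pow (k + 1) t).div_const ((k + 1)! : ℝ)).smul_const (c (k + 1)) using 2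
    rw [Nat.factorial_succ]
    push_cast
    field_simp
  have hsplit : (fun t : ℝ => ∑ k ∈ Finset.range (M + 1), (t ^ k / k !) • c k) =
      fun t : ℝ => ∑ k ∈ Finset.range M, (t ^ (k + 1) / (k + 1)!) • c (k + 1) + c 0 := by
    funext t
    simp [Finset.sum_range_succ']
  rw [hsplit]
  exact (HasDerivAt.fun_sum hterm).add_const (c 0)

/-- Taylor's formula along an integral curve `α` of `Z`: the derivatives of `h ∘ α` are the
`(vfApply Z)^[k] h ∘ α`. -/
theorem norm_sub_taylor_le_of_integralCurve {Z : Rn n → Rn n} (hZ : ContDiff ℝ ∞ Z)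
    {α : ℝ → Rn n} {a : ℝ} (hα : ∀ t ∈ Icc (-a) a, HasDerivAt α (Z (α t)) t) (M : ℕ)
    {h : Rn n → F} (hh : ContDiff ℝ ∞ h) {B : ℝ}
    (hB : ∀ t ∈ Icc (-a) a, ‖(vfApply Z)^[M] h (α t)‖ ≤ B) {τ : ℝ} (hτ : τ ∈ Icc (-a) a) :
    ‖h (α τ) - ∑ k ∈ Finset.range M, (τ ^ k / k !) • (vfApply Z)^[k] h (α 0)‖ ≤ B * |τ| ^ M := by
  induction M generalizing h τ with
  | zero => simpa using hB τ hτ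
  | succ M ih =>
    have h0 : (0 : ℝ) ∈ Icc (-a) a := ⟨by linarith [hτ.1, hτ.2], by linarith [hτ.1, hτ.2]⟩
    have hsub : uIcc 0 τ ⊆ Icc (-a) a := uIcc_subset_Icc h0 hτ
    have hB0 : 0 ≤ B := (norm_nonneg _).trans (hB 0 h0)
    have hderiv : ∀ t ∈ Icc (-a) a, HasDerivAt
        (fun t : ℝ => h (α t) - ∑ k ∈ Finset.range (M + 1), (t ^ k / k !) • (vfApply Z)^[k] h (α 0))
        (vfApply Z h (α t) - ∑ k ∈ Finset.range M,
          (t ^ k / k !) • (vfApply Z)^[k] (vfApply Z h) (α 0)) t := fun t ht =>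
      (((hh.differentiable (by simp)).differentiableAt.hasFDerivAt.comp_hasDerivAt t
        (hα t ht)).sub (hasDerivAt_sum_pow_div_factorial_smul _ M t))
    have hbound : ∀ t ∈ uIcc 0 τ, ‖vfApply Z h (α t) - ∑ k ∈ Finset.range M,
        (t ^ k / k !) • (vfApply Z)^[k] (vfApply Z h) (α 0)‖ ≤ B * |τ| ^ M := by
      intro t ht
      calc _ ≤ B * |t| ^ M := ih (contDiff_vfApply hZ hh) hB (hsub ht)
        _ ≤ B * |τ| ^ M := by
          have htτ : |t| ≤ |τ| := by simpa using abs_sub_left_of_mem_uIcc ht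
          gcongr
    have := (convex_uIcc 0 τ).norm_image_sub_le_of_norm_hasDerivWithin_le
      (fun t ht => (hderiv t (hsub ht)).hasDerivWithinAt) hbound left_mem_uIcc right_mem_uIcc
    simpa [Finset.sum_range_succ', pow_succ, mul_assoc] using this

end Taylor

section Vanishing

variable {n : ℕ} {F : Type*} [NormedAddCommGroup F] [NormedSpace ℝ F]

theorem isBigOOnReach_of_vfApplyList_eq_zero {L : List (Rn n → Rn n)}
    (hL : ∀ Z ∈ L, ContDiff ℝ ∞ Z ∧ ∃ M, ∀ x, ‖Z x‖ ≤ M) {p : Rn n} (K : ℕ) {h : Rn n → F}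
    (hh : ContDiff ℝ ∞ h)
    (hvan : ∀ w : List (Rn n → Rn n), (∀ Y ∈ w, Y ∈ L) → w.length < K → vfApplyList w h p = 0) :
    IsBigOOnReach L p h K := by
  induction L generalizing K h with
  | nil =>
    refine ⟨‖h p‖, Eventually.of_forall fun _ x hx => ?_⟩
    rw [mem_singleton_iff.1 hx]
    cases K with
    | zero => simp
    | succ K => simp [show h p = 0 from hvan [] (by simp) (by simp)]
  | cons Z L ihL =>
    have hZ := (hL Z List.mem_cons_self).1
    induction K generalizing h with
    | zero => exact isBigOOnReach_zero (fun Y hY => (hL Y hY).2) hh.continuous.continuousAt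
    | succ K ihK =>
      obtain ⟨C₁, hC₁⟩ := ihL (fun Y hY => hL Y (List.mem_cons_of_mem Z hY)) (K + 1) hh
        fun w hw hlen => hvan w (fun Y hY => List.mem_cons_of_mem Z (hw Y hY)) hlen
      obtain ⟨C₂, hC₂⟩ := ihK (contDiff_vfApply hZ hh) fun w hw hlen =>
        hvan (Z :: w) (by simpa using hw) (by simpa using hlen)
      refine ⟨C₁ + C₂, ?_⟩
      filter_upwards [hC₁, hC₂] with ρ hρ₁ hρ₂
      rintro _ ⟨α, hα0, hα, τ, hτ, rfl⟩
      have hcurve : ∀ t ∈ Icc (-ρ) ρ, α t ∈ reachSet (Z :: L) p ρ :=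
        fun t ht => ⟨α, hα0, hα, t, ht, rfl⟩
      have hstep : ‖h (α τ) - h (α 0)‖ ≤ C₂ * ρ ^ K * |τ| := by
        simpa using norm_sub_taylor_le_of_integralCurve hZ hα 1 hh
          (fun t ht => hρ₂ _ (hcurve t ht)) hτ
      have hτρ : |τ| ≤ ρ := abs_le.2 hτ
      have h0 : (0 : ℝ) ∈ Icc (-ρ) ρ := ⟨by linarith [abs_nonneg τ], by linarith [abs_nonneg τ]⟩
      have hC₂0 : 0 ≤ C₂ * ρ ^ K := (norm_nonneg _).trans (hρ₂ _ (hcurve 0 h0))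
      calc ‖h (α τ)‖ ≤ ‖h (α 0)‖ + ‖h (α τ) - h (α 0)‖ := norm_le_insert' _ _
        _ ≤ C₁ * ρ ^ (K + 1) + C₂ * ρ ^ K * ρ :=
          add_le_add (hρ₁ _ hα0) (hstep.trans (mul_le_mul_of_nonneg_left hτρ hC₂0))
        _ = (C₁ + C₂) * ρ ^ (K + 1) := by ring

theorem exists_abs_coeff_mul_pow_le (N : ℕ) : ∃ A : ℝ, ∀ (c : ℕ → ℝ) (ρ B : ℝ), 0 < ρ →
    (∀ τ ∈ Icc (-ρ) ρ, |∑ k ∈ Finset.range N, c k * τ ^ k| ≤ B) →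
    ∀ k < N, |c k| * ρ ^ k ≤ A * B := by
  set v : Fin N → ℝ := fun j => ((j : ℕ) + 1 : ℝ)⁻¹
  have hv : Function.Injective v := by
    intro i j hij
    simpa [v, Fin.ext_iff] using hij
  obtain ⟨A, -, hA⟩ := (LinearMap.injective_iff_antilipschitz (Matrix.vandermonde v).mulVecLin).1
    (Matrix.mulVec_injective_of_det_ne_zero (Matrix.det_vandermonde_ne_zero_iff.2 hv))
  refine ⟨A, fun c ρ B hρ hc k hk => ?_⟩
  set d : Fin N → ℝ := fun j => c j * ρ ^ (j : ℕ)
  have hB : 0 ≤ B := (abs_nonneg _).trans (hc 0 ⟨by linarith, by linarith⟩)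
  have hVd : ‖(Matrix.vandermonde v).mulVecLin d‖ ≤ B := by
    refine (pi_norm_le_iff_of_nonneg hB).2 fun i => ?_
    have hvi : 0 < v i ∧ v i ≤ 1 := ⟨by positivity, inv_le_one_of_one_le₀ (by simp)⟩
    have := hc (ρ * v i) ⟨by nlinarith, by nlinarith⟩
    simpa [Matrix.mulVec, dotProduct, Matrix.vandermonde_apply, d, Finset.sum_range, mul_pow,
      mul_comm, mul_left_comm, mul_assoc] using this
  calc |c k| * ρ ^ k = ‖d ⟨k, hk⟩‖ := by simp [d, abs_of_pos hρ]
    _ ≤ ‖d‖ := norm_le_pi_norm d _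
    _ ≤ A * ‖(Matrix.vandermonde v).mulVecLin d‖ := ZeroHomClass.bound_of_antilipschitz _ hA d
    _ ≤ A * B := by gcongr

theorem exists_abs_vfApply_le_of_integralCurve (K : ℕ) : ∃ A : ℝ,
    ∀ {Z : Rn n → Rn n} {α : ℝ → Rn n} {h : Rn n → ℝ} {ρ C B : ℝ}, ContDiff ℝ ∞ Z →
    ContDiff ℝ ∞ h → 0 < ρ → ρ ≤ 1 → (∀ t ∈ Icc (-ρ) ρ, HasDerivAt α (Z (α t)) t) →
    (∀ t ∈ Icc (-ρ) ρ, |h (α t)| ≤ C * ρ ^ (K + 1)) →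
    (∀ t ∈ Icc (-ρ) ρ, |(vfApply Z)^[K + 2] h (α t)| ≤ B) →
    |vfApply Z h (α 0)| ≤ A * (C + B) * ρ ^ K := by
  obtain ⟨A, hA⟩ := exists_abs_coeff_mul_pow_le (K + 2)
  refine ⟨A, fun {Z α h ρ C B} hZ hh hρ hρ1 hα hC hB => ?_⟩
  have hpoly : ∀ τ ∈ Icc (-ρ) ρ, |∑ k ∈ Finset.range (K + 2),
      (vfApply Z)^[k] h (α 0) / k ! * τ ^ k| ≤ (C + B) * ρ ^ (K + 1) := by
    intro τ hτ
    have htaylor := norm_sub_taylor_le_of_integralCurve hZ hα (K + 2) hh hB hτ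
    have hsum : ∑ k ∈ Finset.range (K + 2), (τ ^ k / k !) • (vfApply Z)^[k] h (α 0) =
        ∑ k ∈ Finset.range (K + 2), (vfApply Z)^[k] h (α 0) / k ! * τ ^ k :=
      Finset.sum_congr rfl fun k _ => by rw [smul_eq_mul]; ring
    rw [hsum, Real.norm_eq_abs] at htaylor
    have hB0 : 0 ≤ B := (abs_nonneg _).trans (hB τ hτ)
    have hτρ : |τ| ^ (K + 2) ≤ ρ ^ (K + 1) := calc
      |τ| ^ (K + 2) ≤ ρ ^ (K + 2) := pow_le_pow_left₀ (abs_nonneg τ) (abs_le.2 hτ) _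
      _ ≤ ρ ^ (K + 1) := pow_le_pow_of_le_one hρ.le hρ1 (by omega)
    calc _ ≤ |h (α τ)| +
            |h (α τ) - ∑ k ∈ Finset.range (K + 2), (vfApply Z)^[k] h (α 0) / k ! * τ ^ k| := by
          simpa only [Real.norm_eq_abs] using norm_le_insert (E := ℝ) _ _
      _ ≤ C * ρ ^ (K + 1) + B * ρ ^ (K + 1) := add_le_add (hC τ hτ) (htaylor.trans (by gcongr))
      _ = (C + B) * ρ ^ (K + 1) := by ring
  have hcoeff := hA _ ρ _ hρ hpoly 1 (by omega)
  simp only [Function.iterate_one, Nat.factorial_one, Nat.cast_one, div_one, pow_one] at hcoeff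
  refine le_of_mul_le_mul_right ?_ hρ
  calc |vfApply Z h (α 0)| * ρ ≤ A * ((C + B) * ρ ^ (K + 1)) := hcoeff
    _ = A * (C + B) * ρ ^ K * ρ := by ring

theorem IsBigOOnReach.vfApply_of_cons {Z : Rn n → Rn n} {L : List (Rn n → Rn n)}
    (hZ : ContDiff ℝ ∞ Z) (hL : ∀ Y ∈ Z :: L, ∃ M, ∀ x, ‖Y x‖ ≤ M) {p : Rn n} {h : Rn n → ℝ}
    (hh : ContDiff ℝ ∞ h) {K : ℕ} (hK : IsBigOOnReach (Z :: L) p h (K + 1)) :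
    IsBigOOnReach L p (vfApply Z h) K := by
  obtain ⟨C, hC⟩ := hK
  obtain ⟨B, hB⟩ := isBigOOnReach_zero hL (p := p)
    (contDiff_iterate_vfApply hZ hh (K + 2)).continuous.continuousAt
  obtain ⟨r, hr, ε, hε, hcurve⟩ :=
    (hZ.contDiffAt.of_le (by simp)).exists_forall_mem_closedBall_exists_eq_forall_mem_Ioo_hasDerivAt
      (x₀ := p) 0
  obtain ⟨A, hA⟩ := exists_abs_vfApply_le_of_integralCurve (n := n) K
  refine ⟨A * (C + B), ?_⟩
  filter_upwards [hC, hB, eventually_reachSet_subset (fun Y hY => hL Y (List.mem_cons_of_mem Z hY))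
    (closedBall_mem_nhds p hr), Ioo_mem_nhdsGT (lt_min hε one_pos)] with ρ hρC hρB hρr hρ y hy
  obtain ⟨α, hα0, hα⟩ := hcurve y (hρr hy)
  have hρε : ρ < ε := hρ.2.trans_le (min_le_left ε 1)
  have hαI : ∀ t ∈ Icc (-ρ) ρ, HasDerivAt α (Z (α t)) t := fun t ht =>
    hα t ⟨by linarith [ht.1], by linarith [ht.2]⟩
  have hmem : ∀ t ∈ Icc (-ρ) ρ, α t ∈ reachSet (Z :: L) p ρ :=
    fun t ht => ⟨α, hα0 ▸ hy, hαI, t, ht, rfl⟩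
  rw [← hα0, Real.norm_eq_abs]
  exact hA hZ hh hρ.1 (hρ.2.le.trans (min_le_right ε 1)) hαI
    (fun t ht => by simpa using hρC _ (hmem t ht)) (fun t ht => by simpa using hρB _ (hmem t ht))

theorem IsBigOOnReach.vfApplyList {L : List (Rn n → Rn n)}
    (hL : ∀ Z ∈ L, ContDiff ℝ ∞ Z ∧ ∃ M, ∀ x, ‖Z x‖ ≤ M) {p : Rn n} {h : Rn n → ℝ}
    (hh : ContDiff ℝ ∞ h) {K : ℕ} (hK : IsBigOOnReach L p h (K + L.length)) :
    IsBigOOnReach [] p (vfApplyList L h) K := by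
  induction L generalizing h with
  | nil => exact hK
  | cons Z L ih =>
    have hZ := (hL Z List.mem_cons_self).1
    exact ih (fun Y hY => hL Y (List.mem_cons_of_mem Z hY)) (contDiff_vfApply hZ hh)
      (hK.vfApply_of_cons hZ (fun Y hY => (hL Y hY).2) hh)

theorem vfApplyList_eq_zero_of_norm_le {L : List (Rn n → Rn n)}
    (hL : ∀ Z ∈ L, ContDiff ℝ ∞ Z ∧ ∃ M, ∀ x, ‖Z x‖ ≤ M) {f : Rn n → ℝ} {g : Rn n → F}
    (hf : ContDiff ℝ ∞ f) (hg : ContDiff ℝ ∞ g) {p : Rn n} (hfg : ∀ᶠ x in 𝓝 p, ‖f x‖ ≤ ‖g x‖)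
    (hvan : ∀ w : List (Rn n → Rn n), (∀ Y ∈ w, Y ∈ L) → w.length ≤ L.length →
      vfApplyList w g p = 0) :
    vfApplyList L f p = 0 := by
  have hgL : IsBigOOnReach L p g (1 + L.length) :=
    isBigOOnReach_of_vfApplyList_eq_zero hL _ hg fun w hw hlen => hvan w hw (by omega)
  exact (IsBigOOnReach.vfApplyList hL hf (hgL.of_norm_le (fun Z hZ => (hL Z hZ).2) hfg)).eq_zero

end Vanishing

section VanishOrder

variable {n r : ℕ} {F G : Type*} [NormedAddCommGroup F] [NormedSpace ℝ F]
  [NormedAddCommGroup G] [NormedSpace ℝ G]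

theorem vanishOrder_le_vanishOrder {U : Set (Rn n)} {X : Fin r → Rn n → Rn n} {f : Rn n → F}
    {g : Rn n → G} {p : Rn n}
    (H : ∀ Ys : List (Rn n → Rn n), (∀ Y ∈ Ys, InModule U X Y) →
      (∀ w : List (Rn n → Rn n), (∀ Y ∈ w, InModule U X Y) → w.length ≤ Ys.length →
        vfApplyList w g p = 0) → vfApplyList Ys f p = 0) :
    vanishOrder U X g p ≤ vanishOrder U X f p := by
  refine le_sInf ?_
  rintro _ ⟨Ys, rfl, hYs, hne⟩
  by_contra hlt
  refine hne (H Ys hYs fun w hw hlen => ?_)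
  by_contra hw0
  have hle : vanishOrder U X g p ≤ w.length := sInf_le ⟨w, rfl, hw, hw0⟩
  exact hlt (hle.trans (by exact_mod_cast hlen))

theorem vfApplyList_eq_zero_of_nonneg_of_le {U : Set (Rn n)} (hU : IsOpen U) {p : Rn n}
    (hp : p ∈ U) {X : Fin r → Rn n → Rn n} (hX : ∀ j, ContDiffOn ℝ ∞ (X j) U)
    {f g : Rn n → ℝ} (hf : ContDiffOn ℝ ∞ f U) (hg : ContDiffOn ℝ ∞ g U)
    (hfg : ∀ᶠ x in 𝓝 p, 0 ≤ f x ∧ f x ≤ g x) {Ys : List (Rn n → Rn n)}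
    (hYs : ∀ Y ∈ Ys, InModule U X Y)
    (hvan : ∀ w : List (Rn n → Rn n), (∀ Y ∈ w, InModule U X Y) → w.length ≤ Ys.length →
      vfApplyList w g p = 0) :
    vfApplyList Ys f p = 0 := by
  obtain ⟨χ, hχ, hχc, hχU, hχ1⟩ := exists_cutoff hU hp
  have hcut : ∀ {E : Type} [NormedAddCommGroup E] [NormedSpace ℝ E] (u : Rn n → E),
      (fun x => χ x • u x) =ᶠ[𝓝 p] u := fun u => hχ1.mono fun x hx => by simp [hx]
  set L := Ys.map fun Y x => χ x • Y x
  have hLD : ∀ Z ∈ L, InModule U X Z := by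
    simp only [L, List.mem_map]
    rintro _ ⟨Y, hY, rfl⟩
    exact (hYs Y hY).smul hχ
  have hL : ∀ Z ∈ L, ContDiff ℝ ∞ Z ∧ ∃ M, ∀ x, ‖Z x‖ ≤ M := by
    simp only [L, List.mem_map]
    rintro _ ⟨Y, hY, rfl⟩
    have hsmooth := contDiff_smul_of_tsupport_subset hU hχ hχU ((hYs Y hY).contDiffOn hX)
    exact ⟨hsmooth, hsmooth.continuous.bounded_above_of_compact_support hχc.smul_right⟩
  have hloc : vfApplyList L (fun x => χ x • f x) =ᶠ[𝓝 p] vfApplyList Ys f :=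
    vfApplyList_eventuallyEq (List.forall₂_map_left_iff.2 (List.forall₂_same.2 fun Y _ => hcut Y))
      (hcut f)
  rw [← hloc.eq_of_nhds]
  refine vfApplyList_eq_zero_of_norm_le hL (contDiff_smul_of_tsupport_subset hU hχ hχU hf)
    (contDiff_smul_of_tsupport_subset hU hχ hχU hg) ?_ fun w hw hlen => ?_
  · filter_upwards [hfg, hcut f, hcut g] with x hx hfx hgx
    rw [hfx, hgx, Real.norm_of_nonneg hx.1, Real.norm_of_nonneg (hx.1.trans hx.2)]
    exact hx.2
  · rw [(vfApplyList_eventuallyEq (List.forall₂_same.2 fun Y _ => EventuallyEq.rfl)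
      (hcut g)).eq_of_nhds]
    exact hvan w (fun Y hY => hLD Y (hw Y hY)) (by simpa [L] using hlen)

end VanishOrder

theorem vanishOrder_mono_general {n r : ℕ} (U : Set (Rn n)) (hU : IsOpen U) (p₀ : Rn n) (hp₀ : p₀ ∈ U)
    (X : Fin r → Rn n → Rn n) (hX : ∀ j, ContDiffOn ℝ (⊤ : ℕ∞) (X j) U)
    (f g : Rn n → ℝ) (hf : ContDiffOn ℝ (⊤ : ℕ∞) f U) (hg : ContDiffOn ℝ (⊤ : ℕ∞) g U)
    (hfg : ∀ᶠ x in 𝓝 p₀, 0 ≤ f x ∧ f x ≤ g x) :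
    vanishOrder U X g p₀ ≤ vanishOrder U X f p₀ :=
  vanishOrder_le_vanishOrder fun _ hYs hvan =>
    vfApplyList_eq_zero_of_nonneg_of_le hU hp₀ hX hf hg hfg hYs hvan

/-- If `f, g` are germs of real-valued smooth functions at `p₀` with
`0 ≤ f ≤ g` on a neighborhood of `p₀` and `f(p₀) = g(p₀)`, then `ν_𝒟(f)(p₀) ≥ ν_𝒟(g)(p₀)`. -/
theorem vanishOrder_mono {n r : ℕ} (U : Set (Rn n)) (hU : IsOpen U) (p₀ : Rn n) (hp₀ : p₀ ∈ U)
    (X : Fin r → Rn n → Rn n) (hX : ∀ j, ContDiffOn ℝ (⊤ : ℕ∞) (X j) U)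
    (hind : ∀ x ∈ U, LinearIndependent ℝ (fun j => X j x))
    (f g : Rn n → ℝ) (hf : ContDiffOn ℝ (⊤ : ℕ∞) f U) (hg : ContDiffOn ℝ (⊤ : ℕ∞) g U)
    (hfg : ∀ᶠ x in 𝓝 p₀, 0 ≤ f x ∧ f x ≤ g x) (heq : f p₀ = g p₀) :
    vanishOrder U X g p₀ ≤ vanishOrder U X f p₀ :=
  vanishOrder_mono_general U hU p₀ hp₀ X hX f g hf hg hfg
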